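/- arXiv:1704.08716 — 2 statements merged into one kernel-verified Lean document; each statement's English description precedes it below -/
import Mathlib

section
/- For independent random subsets 𝒯_1, …, 𝒯_K of a finite set 𝕄, the detection probability Σ_{t ⊆ 𝕄} Pr(𝒯_i = t)·Π_{k≠i}(1 − Pr(𝒯_k = t)) is bounded below by Σ_{x=0}^{|𝕄|} Pr(|𝒯_i| = x)·Π_{k≠i}(1 − Pr(|𝒯_k| = x)); that is, grouping subsets only by cardinality gives a lower bound on the probability that no other component occupies the same subset. -/
open MeasureTheory ProbabilityTheory

section

variable {M : Type*}

local instance finsetMeasurableSpace9 : MeasurableSpace (Finset M) := ⊤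

/-- For independent random subsets `𝒯 1, …, 𝒯 K` of a finite
set `𝕄`, the detection probability
`Σ_{t ⊆ 𝕄} Pr(𝒯 i = t)·Π_{k≠i}(1 − Pr(𝒯 k = t))` is bounded below by
`Σ_{x=0}^{|𝕄|} Pr(|𝒯 i| = x)·Π_{k≠i}(1 − Pr(|𝒯 k| = x))`: grouping subsets
only by cardinality gives a lower bound. -/
theorem detection_probability_cardinality_lower_bound
    {Ω : Type*} [MeasurableSpace Ω] (μ : Measure Ω) [IsProbabilityMeasure μ]
    [Fintype M] [DecidableEq M]
    {K : ℕ} (T : Fin K → Ω → Finset M) (i : Fin K)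
    (hmeas : ∀ j, Measurable (T j))
    (hindep : iIndepFun (m := fun _ => finsetMeasurableSpace9) T μ) :
    ∑ x ∈ Finset.range (Fintype.card M + 1),
        μ {ω | (T i ω).card = x} *
          ∏ k ∈ Finset.univ.erase i, (1 - μ {ω | (T k ω).card = x}) ≤
      ∑ t : Finset M,
        μ {ω | T i ω = t} *
          ∏ k ∈ Finset.univ.erase i, (1 - μ {ω | T k ω = t}) := by
  classical
  have key := Finset.sum_fiberwise_of_maps_to
      (s := (Finset.univ : Finset (Finset M)))
      (t := Finset.range (Fintype.card M + 1))
      (g := Finset.card)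
      (fun t _ => Finset.mem_range.2 (Nat.lt_succ_of_le (Finset.card_le_univ t)))
      (fun t => μ {ω | T i ω = t} *
        ∏ k ∈ Finset.univ.erase i, (1 - μ {ω | T k ω = t}))
  rw [← key]
  apply Finset.sum_le_sum
  intro x _
  have hset : {ω | (T i ω).card = x} =
      ⋃ t ∈ Finset.univ.filter (fun t : Finset M => t.card = x),
        {ω | T i ω = t} := by
    ext ω
    simp [Finset.mem_filter]
  have hdisj : Set.PairwiseDisjoint
      (↑(Finset.univ.filter (fun t : Finset M => t.card = x)))
      (fun t => {ω | T i ω = t}) := by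
    intro a _ b _ hab
    refine Set.disjoint_left.2 fun ω ha hb => hab ?_
    simp only [Set.mem_setOf_eq] at ha hb
    rw [← ha, hb]
  have hμ : μ {ω | (T i ω).card = x} =
      ∑ t ∈ Finset.univ.filter (fun t : Finset M => t.card = x),
        μ {ω | T i ω = t} := by
    rw [hset, measure_biUnion_finset hdisj]
    intro t _
    exact hmeas i (MeasurableSpace.measurableSet_top (s := {t}))
  rw [hμ, Finset.sum_mul]
  apply Finset.sum_le_sum
  intro t ht
  have htx : t.card = x := (Finset.mem_filter.1 ht).2
  refine mul_le_mul_right ?_ _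
  apply Finset.prod_le_prod'
  intro k _
  apply tsub_le_tsub_left
  apply measure_mono
  intro ω hω
  simp only [Set.mem_setOf_eq] at hω ⊢
  rw [hω, htx]

end
end

section
/- The weighted Jaccard distance satisfies the triangle inequality on nonnegative weight vectors over a finite feature set: for all F, G, H, δ(F, H) ≤ δ(F, G) + δ(G, H), where δ(F, G) = 1 − (Σ_f min(F(f),G(f)))/(Σ_f max(F(f),G(f))) with δ(0,0) := 0; hence δ is a pseudometric. -/
open Finset

/-- The weighted Jaccard distance, with `δ(0,0) := 0`. -/
noncomputable def wJaccard {ι : Type*} [Fintype ι] (F G : ι → ℝ) : ℝ :=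
  if (∑ f, max (F f) (G f)) = 0 then 0
  else 1 - (∑ f, min (F f) (G f)) / (∑ f, max (F f) (G f))

lemma wJaccard_key (a b c u v w M1 M2 M3 : ℝ)
    (ha : 0 ≤ a) (hc : 0 ≤ c)
    (hu : 0 ≤ u) (hv : 0 ≤ v)
    (hM1 : 0 < M1) (hM2 : 0 < M2) (hM3 : 0 < M3)
    (h1 : 2*M1 = a+b+u) (h2 : 2*M2 = b+c+v) (h3 : 2*M3 = a+c+w)
    (hw : w ≤ u+v) (hba : b ≤ a+u) (hbc : b ≤ c+v) :
    w/M3 ≤ u/M1 + v/M2 := by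
  have hS : (0:ℝ) < a+c+u+v := by nlinarith
  have t1 : w/M3 ≤ 2*(u+v)/(a+c+u+v) := by
    rw [div_le_div_iff₀ hM3 hS]; nlinarith
  have t2 : 2*u/(a+c+u+v) ≤ u/M1 := by
    rw [div_le_div_iff₀ hS hM1]; nlinarith
  have t3 : 2*v/(a+c+u+v) ≤ v/M2 := by
    rw [div_le_div_iff₀ hS hM2]; nlinarith
  have e : 2*(u+v)/(a+c+u+v) = 2*u/(a+c+u+v) + 2*v/(a+c+u+v) := by ring
  linarith

lemma wJaccard_nonneg {ι : Type*} [Fintype ι] (F G : ι → ℝ)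
    (hF : ∀ f, 0 ≤ F f) (hG : ∀ f, 0 ≤ G f) : 0 ≤ wJaccard F G := by
  unfold wJaccard
  split_ifs with h
  · exact le_refl 0
  · have hMnn : 0 ≤ ∑ f, max (F f) (G f) :=
      Finset.sum_nonneg fun f _ => le_trans (hF f) (le_max_left _ _)
    have hM : 0 < ∑ f, max (F f) (G f) := lt_of_le_of_ne hMnn (Ne.symm h)
    have hm : (∑ f, min (F f) (G f)) ≤ ∑ f, max (F f) (G f) :=
      Finset.sum_le_sum fun f _ => min_le_max
    have := (div_le_one hM).2 hm
    linarith

/-- The weighted Jaccard distance satisfies the triangle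
inequality on nonnegative weight vectors over a finite feature set:
`δ(F,H) ≤ δ(F,G) + δ(G,H)`; hence it is a pseudometric. -/
theorem wJaccard_triangle {ι : Type*} [Fintype ι] (F G H : ι → ℝ)
    (hF : ∀ f, 0 ≤ F f) (hG : ∀ f, 0 ≤ G f) (hH : ∀ f, 0 ≤ H f) :
    wJaccard F H ≤ wJaccard F G + wJaccard G H := by
  -- helper to extract pointwise vanishing from a zero sum of maxes
  have zero_of_sum : ∀ (X Y : ι → ℝ), (∀ f, 0 ≤ X f) → (∀ f, 0 ≤ Y f) →
      (∑ f, max (X f) (Y f)) = 0 → ∀ f, X f = 0 ∧ Y f = 0 := by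
    intro X Y hX hY hsum f
    have hnn : ∀ f ∈ Finset.univ, 0 ≤ max (X f) (Y f) :=
      fun f _ => le_trans (hX f) (le_max_left _ _)
    have h0 : max (X f) (Y f) = 0 :=
      (Finset.sum_eq_zero_iff_of_nonneg hnn).1 hsum f (Finset.mem_univ f)
    constructor
    · exact le_antisymm (h0 ▸ le_max_left (X f) (Y f)) (hX f)
    · exact le_antisymm (h0 ▸ le_max_right (X f) (Y f)) (hY f)
  by_cases h3 : (∑ f, max (F f) (H f)) = 0
  · have : wJaccard F H = 0 := by unfold wJaccard; rw [if_pos h3]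
    rw [this]
    exact add_nonneg (wJaccard_nonneg F G hF hG) (wJaccard_nonneg G H hG hH)
  by_cases h1 : (∑ f, max (F f) (G f)) = 0
  · have hFG := zero_of_sum F G hF hG h1
    have hFG' : F = G := funext fun f => by rw [(hFG f).1, (hFG f).2]
    have : wJaccard F G = 0 := by unfold wJaccard; rw [if_pos h1]
    rw [this, hFG', zero_add]
  by_cases h2 : (∑ f, max (G f) (H f)) = 0
  · have hGH := zero_of_sum G H hG hH h2
    have hGH' : H = G := funext fun f => by rw [(hGH f).1, (hGH f).2]
    have : wJaccard G H = 0 := by unfold wJaccard; rw [if_pos h2]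
    rw [this, hGH', add_zero]
  -- main case
  have posM : ∀ (X Y : ι → ℝ), (∀ f, 0 ≤ X f) → (∑ f, max (X f) (Y f)) ≠ 0 →
      0 < ∑ f, max (X f) (Y f) := by
    intro X Y hX hne
    exact lt_of_le_of_ne
      (Finset.sum_nonneg fun f _ => le_trans (hX f) (le_max_left _ _)) (Ne.symm hne)
  have hM1 := posM F G hF h1
  have hM2 := posM G H hG h2
  have hM3 := posM F H hF h3
  set M1 := ∑ f, max (F f) (G f) with hM1def
  set M2 := ∑ f, max (G f) (H f) with hM2def
  set M3 := ∑ f, max (F f) (H f) with hM3def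
  set m1 := ∑ f, min (F f) (G f) with hm1def
  set m2 := ∑ f, min (G f) (H f) with hm2def
  set m3 := ∑ f, min (F f) (H f) with hm3def
  set a := ∑ f, F f with hadef
  set b := ∑ f, G f with hbdef
  set c := ∑ f, H f with hcdef
  have ha : 0 ≤ a := Finset.sum_nonneg fun f _ => hF f
  have hc : 0 ≤ c := Finset.sum_nonneg fun f _ => hH f
  -- abs representations
  have hu : M1 - m1 = ∑ f, |F f - G f| := by
    rw [hM1def, hm1def, ← Finset.sum_sub_distrib]
    exact Finset.sum_congr rfl fun f _ => (by rw [max_sub_min_eq_abs, abs_sub_comm])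
  have hv : M2 - m2 = ∑ f, |G f - H f| := by
    rw [hM2def, hm2def, ← Finset.sum_sub_distrib]
    exact Finset.sum_congr rfl fun f _ => (by rw [max_sub_min_eq_abs, abs_sub_comm])
  have hw : M3 - m3 = ∑ f, |F f - H f| := by
    rw [hM3def, hm3def, ← Finset.sum_sub_distrib]
    exact Finset.sum_congr rfl fun f _ => (by rw [max_sub_min_eq_abs, abs_sub_comm])
  have hu0 : 0 ≤ M1 - m1 := by
    rw [hu]; exact Finset.sum_nonneg fun f _ => abs_nonneg _
  have hv0 : 0 ≤ M2 - m2 := by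
    rw [hv]; exact Finset.sum_nonneg fun f _ => abs_nonneg _
  -- sum identities
  have he1 : M1 + m1 = a + b := by
    rw [hM1def, hm1def, hadef, hbdef, ← Finset.sum_add_distrib, ← Finset.sum_add_distrib]
    exact Finset.sum_congr rfl fun f _ => max_add_min _ _
  have he2 : M2 + m2 = b + c := by
    rw [hM2def, hm2def, hbdef, hcdef, ← Finset.sum_add_distrib, ← Finset.sum_add_distrib]
    exact Finset.sum_congr rfl fun f _ => max_add_min _ _
  have he3 : M3 + m3 = a + c := by
    rw [hM3def, hm3def, hadef, hcdef, ← Finset.sum_add_distrib, ← Finset.sum_add_distrib]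
    exact Finset.sum_congr rfl fun f _ => max_add_min _ _
  -- triangle for abs sums
  have htri : M3 - m3 ≤ (M1 - m1) + (M2 - m2) := by
    rw [hu, hv, hw, ← Finset.sum_add_distrib]
    exact Finset.sum_le_sum fun f _ => abs_sub_le _ _ _
  have hba : b ≤ a + (M1 - m1) := by
    rw [hu, hadef, hbdef, ← Finset.sum_add_distrib]
    refine Finset.sum_le_sum fun f _ => ?_
    have := le_abs_self (G f - F f)
    rw [abs_sub_comm] at this
    linarith
  have hbc : b ≤ c + (M2 - m2) := by
    rw [hv, hbdef, hcdef, ← Finset.sum_add_distrib]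
    refine Finset.sum_le_sum fun f _ => ?_
    have := le_abs_self (G f - H f)
    linarith
  have key := wJaccard_key a b c (M1 - m1) (M2 - m2) (M3 - m3) M1 M2 M3
    ha hc hu0 hv0 hM1 hM2 hM3 (by linarith) (by linarith) (by linarith)
    htri hba hbc
  unfold wJaccard
  rw [if_neg h1, if_neg h2, if_neg h3]
  have eq1 : 1 - m1 / M1 = (M1 - m1) / M1 := by field_simp
  have eq2 : 1 - m2 / M2 = (M2 - m2) / M2 := by field_simp
  have eq3 : 1 - m3 / M3 = (M3 - m3) / M3 := by field_simp
  rw [eq1, eq2, eq3]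
  exact key
end
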